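/- Let e be a Hermite–Biehler function and define e₁(z) := (z + i)·e(z). Then e₁ is a Hermite–Biehler function, and an entire function h is associated to B(e) if and only if h belongs to the de Branges space B(e₁); that is, assoc B(e) = B((z+i)e). -/

import Mathlib

open MeasureTheory Complex

noncomputable section

/-- `f#(z) := conj (f (conj z))`. -/
def fsharp (f : ℂ → ℂ) : ℂ → ℂ := fun z => (starRingEnd ℂ) (f ((starRingEnd ℂ) z))

/-- Hermite–Biehler function: entire with `|e(conj z)| < |e z|` on the upper half-plane. -/
def IsHB (e : ℂ → ℂ) : Prop :=
  Differentiable ℂ e ∧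
  ∀ z : ℂ, 0 < z.im → ‖e ((starRingEnd ℂ) z)‖ < ‖e z‖

/-- Membership in the de Branges space `B(e)`. -/
def MemDB (e f : ℂ → ℂ) : Prop :=
  Differentiable ℂ f ∧
  Integrable (fun x : ℝ => ‖f x / e x‖ ^ 2) ∧
  ∃ c : ℝ, 0 ≤ c ∧ ∀ z : ℂ, 0 < z.im →
    ‖f z / e z‖ ≤ c / Real.sqrt z.im ∧
    ‖fsharp f z / e z‖ ≤ c / Real.sqrt z.im

/-- Squared norm in `B(e)`: `∫ |f(x)|² |e(x)|⁻² dx`. -/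
def dBnormSq (e f : ℂ → ℂ) : ℝ :=
  ∫ x : ℝ, ‖f x‖ ^ 2 / ‖e x‖ ^ 2

/-- Inner product in `B(e)`: `∫ conj (f x) * g x * |e x|⁻² dx`. -/
def dBinner (e f g : ℂ → ℂ) : ℂ :=
  ∫ x : ℝ, (starRingEnd ℂ) (f x) * g x / ((‖e x‖ : ℝ) : ℂ) ^ 2

/-- The reproducing kernel of `B(e)`. -/
def dBkernel (e : ℂ → ℂ) (z w : ℂ) : ℂ :=
  if z = (starRingEnd ℂ) w then
    (deriv (fsharp e) z * e z - deriv e z * fsharp e z) / (2 * Real.pi * Complex.I)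
  else
    (fsharp e z * e ((starRingEnd ℂ) w) - e z * fsharp e ((starRingEnd ℂ) w)) /
      (2 * Real.pi * Complex.I * (z - (starRingEnd ℂ) w))

/-- `s_β(z) := (i/2) (e^{iβ} e(z) − e^{−iβ} e#(z))`. -/
def sfun (e : ℂ → ℂ) (β : ℝ) (z : ℂ) : ℂ :=
  Complex.I / 2 *
    (Complex.exp (Complex.I * β) * e z - Complex.exp (-(Complex.I * β)) * fsharp e z)

end

/-- `h` is associated to `B(e)`: for every `f ∈ B(e)` and `w` with `f w ≠ 0`, the entire
function `z ↦ (f(z)h(w) − f(w)h(z))/(z − w)` (extended across the removable singularity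
at `w`) belongs to `B(e)`. -/
def AssocCond (e h : ℂ → ℂ) : Prop :=
  ∀ (f : ℂ → ℂ) (w : ℂ), MemDB e f → f w ≠ 0 →
    ∃ g : ℂ → ℂ, (∀ z : ℂ, z ≠ w → g z = (f z * h w - f w * h z) / (z - w)) ∧ MemDB e g


/-!
Membership in a de Branges space passes to every entire `g` such that `g/e` and `g#/e` are
dominated on the closed upper half-plane by a fixed combination of the corresponding quotients
of members of de Branges spaces. On that half-plane `|z - i| ≤ |z + i|` and `|z + i| ≥ 1`.

If `h` is associated, apply the definition to `f = 2πi K(i, ·) ∈ B(e)`, which does not vanish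
at `i`: the resulting `g ∈ B(e)` satisfies `f(i) h = f h(i) - (z - i) g`, so `h/((z + i) e)` is
dominated by `f/e` and `g/e`. Conversely, for `h ∈ B((z + i) e)` and `f ∈ B(e)` with
`f(w) ≠ 0`, the quotient `g = (f h(w) - f(w) h)/(z - w)` is dominated by `|f|` near `w`, where
`|f|` is bounded below, and by `|f| + |h|/|z + i|` away from `w`. The reflections `f#, g#, h#`
satisfy the conjugated identities.
-/

open ComplexConjugate Filter Metric

lemma fsharp_apply (f : ℂ → ℂ) (z : ℂ) : fsharp f z = conj (f (conj z)) := rfl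

lemma norm_fsharp (f : ℂ → ℂ) (z : ℂ) : ‖fsharp f z‖ = ‖f (conj z)‖ := norm_conj _

lemma Differentiable.fsharp {f : ℂ → ℂ} (hf : Differentiable ℂ f) :
    Differentiable ℂ (fsharp f) := fun z => by
  have h := (hf (conj z)).conj_conj
  rwa [conj_conj] at h

lemma fsharp_eq_div_sub {f p : ℂ → ℂ} {w : ℂ} (hf : ∀ z, z ≠ w → f z = p z / (z - w))
    {z : ℂ} (hz : z ≠ conj w) : fsharp f z = fsharp p z / (z - conj w) := by
  have hz' : conj z ≠ w := fun h => hz (by rw [← h, conj_conj])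
  simp [fsharp_apply, hf _ hz']

lemma Differentiable.dslope {f : ℂ → ℂ} (hf : Differentiable ℂ f) (a : ℂ) :
    Differentiable ℂ (dslope f a) :=
  differentiableOn_univ.1 <| (differentiableOn_dslope univ_mem).2 hf.differentiableOn

lemma im_add_one_le_norm_add_I (z : ℂ) : z.im + 1 ≤ ‖z + I‖ := by
  simpa using im_le_norm (z + I)

lemma one_le_norm_add_I {z : ℂ} (hz : 0 ≤ z.im) : 1 ≤ ‖z + I‖ := by
  linarith [im_add_one_le_norm_add_I z]

lemma two_mul_sqrt_im_le_norm_add_I {z : ℂ} (hz : 0 ≤ z.im) : 2 * √z.im ≤ ‖z + I‖ := by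
  nlinarith [Real.sq_sqrt hz, sq_nonneg (√z.im - 1), im_add_one_le_norm_add_I z]

lemma sq_norm_add_I (z : ℂ) : ‖z + I‖ ^ 2 = ‖z - I‖ ^ 2 + 4 * z.im := by
  simp only [Complex.sq_norm, normSq_apply, add_re, add_im, sub_re, sub_im, I_re, I_im]
  ring

lemma norm_sub_I_le_norm_add_I {z : ℂ} (hz : 0 ≤ z.im) : ‖z - I‖ ≤ ‖z + I‖ :=
  pow_le_pow_iff_left₀ (norm_nonneg _) (norm_nonneg _) two_ne_zero |>.1 <| by
    linarith [sq_norm_add_I z]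

lemma norm_sub_I_lt_norm_add_I {z : ℂ} (hz : 0 < z.im) : ‖z - I‖ < ‖z + I‖ :=
  pow_lt_pow_iff_left₀ (norm_nonneg _) (norm_nonneg _) two_ne_zero |>.1 <| by
    linarith [sq_norm_add_I z]

lemma norm_mul_sub_mul_le {u v : ℂ} (h : ‖u‖ ≤ ‖v‖) (a b : ℂ) :
    ‖u * a - v * b‖ ≤ (‖a‖ + ‖b‖) * ‖v‖ := by
  calc ‖u * a - v * b‖ ≤ ‖u‖ * ‖a‖ + ‖v‖ * ‖b‖ := by
        simpa only [norm_mul] using norm_sub_le (u * a) (v * b)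
    _ ≤ ‖v‖ * ‖a‖ + ‖v‖ * ‖b‖ := by gcongr
    _ = (‖a‖ + ‖b‖) * ‖v‖ := by ring

namespace IsHB

lemma ne_zero {e : ℂ → ℂ} (he : IsHB e) {z : ℂ} (hz : 0 < z.im) : e z ≠ 0 :=
  norm_pos_iff.1 <| (norm_nonneg _).trans_lt (he.2 z hz)

lemma norm_fsharp_le {e : ℂ → ℂ} (he : IsHB e) {z : ℂ} (hz : 0 ≤ z.im) :
    ‖fsharp e z‖ ≤ ‖e z‖ := by
  rw [norm_fsharp]
  rcases hz.lt_or_eq with hz | hz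
  · exact (he.2 z hz).le
  · rw [conj_eq_iff_im.2 hz.symm]

lemma add_I_mul {e : ℂ → ℂ} (he : IsHB e) : IsHB (fun z => (z + I) * e z) := by
  refine ⟨(differentiable_id.add_const I).mul he.1, fun z hz => ?_⟩
  have h : ‖conj z + I‖ < ‖z + I‖ := by
    rw [← norm_conj, map_add, conj_conj, conj_I, ← sub_eq_add_neg]
    exact norm_sub_I_lt_norm_add_I hz
  simp only [norm_mul]
  exact mul_lt_mul'' h (he.2 z hz) (norm_nonneg _) (norm_nonneg _)

lemma exists_norm_le_mul_norm {e : ℂ → ℂ} (he : IsHB e) {K : Set ℂ} (hK : IsCompact K)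
    (hKim : ∀ z ∈ K, 0 < z.im) {F : ℂ → ℂ} (hF : ContinuousOn F K) :
    ∃ c, 0 ≤ c ∧ ∀ z ∈ K, ‖F z‖ ≤ c * ‖e z‖ := by
  obtain ⟨c, hc⟩ := hK.exists_bound_of_continuousOn
    (hF.div he.1.continuous.continuousOn fun z hz => he.ne_zero (hKim z hz))
  refine ⟨max c 0, le_max_right _ _, fun z hz => ?_⟩
  have hez := he.ne_zero (hKim z hz)
  calc ‖F z‖ = ‖F z / e z‖ * ‖e z‖ := by
        rw [norm_div, div_mul_cancel₀ _ (norm_ne_zero_iff.2 hez)]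
    _ ≤ max c 0 * ‖e z‖ := by gcongr; exact (hc z hz).trans (le_max_left _ _)

end IsHB

lemma aestronglyMeasurable_norm_div_sq {f e : ℂ → ℂ} (hf : Continuous f) (he : Continuous e) :
    AEStronglyMeasurable (fun x : ℝ => ‖f x / e x‖ ^ 2) :=
  (((hf.comp continuous_ofReal).measurable.div
    (he.comp continuous_ofReal).measurable).norm.pow_const 2).aestronglyMeasurable

lemma MemDB.of_norm_le_add {e e₁ e₂ f₁ f₂ g : ℂ → ℂ} {a b : ℝ}
    (hf₁ : MemDB e₁ f₁) (hf₂ : MemDB e₂ f₂) (hg : Differentiable ℂ g) (he : Continuous e)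
    (ha : 0 ≤ a) (hb : 0 ≤ b)
    (hbound : ∀ z : ℂ, 0 ≤ z.im → ‖g z / e z‖ ≤ a * ‖f₁ z / e₁ z‖ + b * ‖f₂ z / e₂ z‖)
    (hbound_fsharp : ∀ z : ℂ, 0 < z.im →
      ‖fsharp g z / e z‖ ≤ a * ‖fsharp f₁ z / e₁ z‖ + b * ‖fsharp f₂ z / e₂ z‖) :
    MemDB e g := by
  obtain ⟨-, hi₁, c₁, hc₁, hb₁⟩ := hf₁
  obtain ⟨-, hi₂, c₂, hc₂, hb₂⟩ := hf₂
  refine ⟨hg, ?_, a * c₁ + b * c₂, by positivity, fun z hz => ⟨?_, ?_⟩⟩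
  · refine ((hi₁.const_mul (2 * a ^ 2)).add (hi₂.const_mul (2 * b ^ 2))).mono'
      (aestronglyMeasurable_norm_div_sq hg.continuous he) (Eventually.of_forall fun x => ?_)
    rw [Real.norm_of_nonneg (by positivity)]
    calc ‖g x / e x‖ ^ 2 ≤ (a * ‖f₁ x / e₁ x‖ + b * ‖f₂ x / e₂ x‖) ^ 2 := by
          gcongr; exact hbound x (by simp)
      _ ≤ 2 * ((a * ‖f₁ x / e₁ x‖) ^ 2 + (b * ‖f₂ x / e₂ x‖) ^ 2) := add_sq_le
      _ = _ := by simp only [Pi.add_apply]; ring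
  · calc ‖g z / e z‖ ≤ a * ‖f₁ z / e₁ z‖ + b * ‖f₂ z / e₂ z‖ := hbound z hz.le
      _ ≤ a * (c₁ / √z.im) + b * (c₂ / √z.im) := by
          gcongr; exacts [(hb₁ z hz).1, (hb₂ z hz).1]
      _ = _ := by ring
  · calc ‖fsharp g z / e z‖ ≤ a * ‖fsharp f₁ z / e₁ z‖ + b * ‖fsharp f₂ z / e₂ z‖ :=
          hbound_fsharp z hz
      _ ≤ a * (c₁ / √z.im) + b * (c₂ / √z.im) := by
          gcongr; exacts [(hb₁ z hz).2, (hb₂ z hz).2]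
      _ = _ := by ring

lemma memDB_add_I_one : MemDB (fun z => z + I) (fun _ => 1) := by
  have hbound : ∀ z : ℂ, 0 < z.im → ‖1 / (z + I)‖ ≤ 1 / 2 / √z.im := fun z hz => by
    rw [norm_div, norm_one, div_div, div_le_div_iff_of_pos_left one_pos
      (by linarith [one_le_norm_add_I hz.le]) (by positivity)]
    exact two_mul_sqrt_im_le_norm_add_I hz.le
  refine ⟨differentiable_const _, ?_, 1 / 2, by norm_num, fun z hz => ?_⟩
  · refine integrable_inv_one_add_sq.congr (Eventually.of_forall fun x => ?_)
    dsimp only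
    rw [norm_div, norm_one, div_pow, one_pow, Complex.sq_norm, normSq_apply]
    simp only [add_re, ofReal_re, I_re, add_im, ofReal_im, I_im]
    ring_nf
  · simpa [fsharp_apply] using hbound z hz

lemma MemDB.of_norm_le_div_norm_add_I {e g : ℂ → ℂ} {C : ℝ} (hC : 0 ≤ C)
    (hg : Differentiable ℂ g) (he : Continuous e)
    (hbound : ∀ z : ℂ, 0 ≤ z.im → ‖g z‖ ≤ C / ‖z + I‖ * ‖e z‖)
    (hbound_fsharp : ∀ z : ℂ, 0 < z.im → ‖fsharp g z‖ ≤ C / ‖z + I‖ * ‖e z‖) :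
    MemDB e g := by
  have key : ∀ {x : ℂ} {z : ℂ}, ‖x‖ ≤ C / ‖z + I‖ * ‖e z‖ →
      ‖x / e z‖ ≤ C * ‖1 / (z + I)‖ + 0 * ‖1 / (z + I)‖ := fun h => by
    rw [norm_div, zero_mul, add_zero, norm_div, norm_one, mul_one_div]
    exact div_le_of_le_mul₀ (norm_nonneg _) (by positivity) h
  refine memDB_add_I_one.of_norm_le_add memDB_add_I_one hg he hC le_rfl
    (fun z hz => key (hbound z hz)) (fun z hz => ?_)
  simpa [fsharp_apply] using key (hbound_fsharp z hz)

section Kernel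

/-- `2πi (z + i)` times the reproducing kernel `dBkernel e z I`. -/
def kernelNum (e : ℂ → ℂ) (z : ℂ) : ℂ := fsharp e z * e (-I) - e z * fsharp e (-I)

noncomputable def kernelI (e : ℂ → ℂ) : ℂ → ℂ := dslope (kernelNum e) (-I)

variable {e : ℂ → ℂ}

lemma Differentiable.kernelI (he : Differentiable ℂ e) : Differentiable ℂ (kernelI e) :=
  ((he.fsharp.mul_const _).sub (he.mul_const _)).dslope _

lemma kernelI_eq {z : ℂ} (hz : z ≠ -I) : kernelI e z = kernelNum e z / (z + I) := by
  have h0 : kernelNum e (-I) = 0 := by rw [kernelNum]; ring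
  rw [kernelI, dslope_of_ne _ hz, slope_def_field, h0, sub_zero, sub_neg_eq_add]

lemma fsharp_kernelI_eq {z : ℂ} (hz : z ≠ I) :
    fsharp (kernelI e) z = (e z * conj (e (-I)) - fsharp e z * conj (fsharp e (-I))) / (z - I) := by
  have hconj : conj (-I) = I := by rw [map_neg, conj_I, neg_neg]
  rw [fsharp_eq_div_sub (fun z hz => by rw [kernelI_eq hz, sub_neg_eq_add]) (hconj ▸ hz), hconj]
  simp only [fsharp_apply, kernelNum, map_sub, map_mul, conj_conj, hconj]

lemma kernelNum_I : kernelNum e I = ((‖e (-I)‖ ^ 2 - ‖e I‖ ^ 2 : ℝ) : ℂ) := by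
  simp only [kernelNum, fsharp_apply, conj_I, map_neg, neg_neg, conj_mul', mul_conj']
  push_cast; ring

lemma kernelI_I_ne_zero (he : IsHB e) : kernelI e I ≠ 0 := by
  have hlt : ‖e (-I)‖ < ‖e I‖ := by simpa using he.2 I (by simp)
  rw [kernelI_eq (by norm_num [Complex.ext_iff]), kernelNum_I]
  refine div_ne_zero (ofReal_ne_zero.2 ?_) (by simp [Complex.ext_iff])
  nlinarith [norm_nonneg (e (-I))]

lemma norm_kernelI_le (he : IsHB e) {z : ℂ} (hz : 0 ≤ z.im) :
    ‖kernelI e z‖ ≤ (‖e (-I)‖ + ‖fsharp e (-I)‖) / ‖z + I‖ * ‖e z‖ := by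
  have hzI : z ≠ -I := by rintro rfl; norm_num at hz
  rw [kernelI_eq hzI, norm_div, div_mul_eq_mul_div]
  gcongr
  exact norm_mul_sub_mul_le (he.norm_fsharp_le hz) _ _

lemma exists_norm_fsharp_kernelI_le (he : IsHB e) : ∃ D, 0 ≤ D ∧
    ∀ z : ℂ, 0 < z.im → ‖fsharp (kernelI e) z‖ ≤ D / ‖z + I‖ * ‖e z‖ := by
  set C := ‖e (-I)‖ + ‖fsharp e (-I)‖
  have hball : ∀ z ∈ closedBall I (1 / 2), 0 < z.im := fun z hz => by
    have h := (abs_le.1 ((abs_im_le_norm (z - I)).trans (mem_closedBall_iff_norm.1 hz))).1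
    simp only [sub_im, I_im] at h
    linarith
  obtain ⟨K, hK, hKb⟩ := he.exists_norm_le_mul_norm (isCompact_closedBall I (1 / 2)) hball
    he.1.kernelI.fsharp.continuous.continuousOn
  refine ⟨5 * (C + K), by positivity, fun z hz => ?_⟩
  have hIz : ‖z + I‖ ≤ ‖z - I‖ + 2 := by
    calc ‖z + I‖ = ‖(z - I) + 2 * I‖ := by ring_nf
      _ ≤ ‖z - I‖ + 2 := by simpa using norm_add_le (z - I) (2 * I)
  have hpos : 0 < ‖z + I‖ := by linarith [one_le_norm_add_I hz.le]
  rcases le_or_gt (1 / 2) ‖z - I‖ with hfar | hnear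
  · have hzI : z ≠ I := by rintro rfl; norm_num at hfar
    rw [fsharp_kernelI_eq hzI, norm_div]
    calc _ ≤ C * ‖e z‖ / ‖z - I‖ := by
          gcongr
          rw [norm_sub_rev, show C = ‖fsharp e (-I)‖ + ‖e (-I)‖ from add_comm _ _,
            ← norm_conj (e (-I)), ← norm_conj (fsharp e (-I))]
          exact norm_mul_sub_mul_le (he.norm_fsharp_le hz.le) _ _
      _ ≤ C * ‖e z‖ / (‖z + I‖ / 5) := by gcongr; linarith
      _ = 5 * C / ‖z + I‖ * ‖e z‖ := by ring
      _ ≤ 5 * (C + K) / ‖z + I‖ * ‖e z‖ := by gcongr; linarith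
  · calc ‖fsharp (kernelI e) z‖ ≤ K * ‖e z‖ := hKb z (mem_closedBall_iff_norm.2 hnear.le)
      _ ≤ 5 * (C + K) / ‖z + I‖ * ‖e z‖ := by
          gcongr
          rw [le_div_iff₀ hpos]
          have hC : 0 ≤ C := by positivity
          nlinarith [mul_le_mul_of_nonneg_left (show ‖z + I‖ ≤ 5 / 2 by linarith) hK]

lemma memDB_kernelI (he : IsHB e) : MemDB e (kernelI e) := by
  obtain ⟨D, hD, hDb⟩ := exists_norm_fsharp_kernelI_le he
  have hC : 0 ≤ ‖e (-I)‖ + ‖fsharp e (-I)‖ := by positivity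
  refine MemDB.of_norm_le_div_norm_add_I (add_nonneg hC hD) he.1.kernelI he.1.continuous
    (fun z hz => (norm_kernelI_le he hz).trans ?_) (fun z hz => (hDb z hz).trans ?_)
  all_goals gcongr ?_ / _ * _; linarith

end Kernel

lemma norm_div_mul_le_of_mul_eq {c a x y u N N' E : ℂ} (hc : c ≠ 0)
    (hu : c * u = x * a - N' * y) (hN : 1 ≤ ‖N‖) (hN' : ‖N'‖ ≤ ‖N‖) :
    ‖u / (N * E)‖ ≤ ‖a‖ / ‖c‖ * ‖x / E‖ + 1 / ‖c‖ * ‖y / E‖ := by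
  have hu' : u = (x * a - N' * y) / c := by rw [← hu, mul_div_cancel_left₀ _ hc]
  have hN0 : ‖N‖ ≠ 0 := by linarith
  calc ‖u / (N * E)‖ = ‖x * a - N' * y‖ / (‖N‖ * (‖c‖ * ‖E‖)) := by
        rw [hu', norm_div, norm_div, norm_mul]; ring
    _ ≤ ‖N‖ * (‖a‖ * ‖x‖ + ‖y‖) / (‖N‖ * (‖c‖ * ‖E‖)) := by
        gcongr
        calc ‖x * a - N' * y‖ ≤ ‖x‖ * ‖a‖ + ‖N'‖ * ‖y‖ := by
              simpa only [norm_mul] using norm_sub_le (x * a) (N' * y)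
          _ ≤ ‖N‖ * (‖a‖ * ‖x‖ + ‖y‖) := by
              nlinarith [norm_nonneg y, mul_nonneg (norm_nonneg a) (norm_nonneg x)]
    _ = ‖a‖ / ‖c‖ * ‖x / E‖ + 1 / ‖c‖ * ‖y / E‖ := by
        rw [mul_div_mul_left _ _ hN0, norm_div, norm_div]; ring

theorem AssocCond.memDB_add_I_mul {e h : ℂ → ℂ} (he : IsHB e) (hh : Differentiable ℂ h)
    (ha : AssocCond e h) : MemDB (fun z => (z + I) * e z) h := by
  obtain ⟨g, hgeq, hg⟩ := ha (kernelI e) I (memDB_kernelI he) (kernelI_I_ne_zero he)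
  have key : ∀ z, kernelI e I * h z = kernelI e z * h I - (z - I) * g z := fun z => by
    rcases eq_or_ne z I with rfl | hz
    · ring
    · rw [hgeq z hz]
      field_simp [sub_ne_zero.2 hz]
      ring
  have key_fsharp : ∀ z, conj (kernelI e I) * fsharp h z =
      fsharp (kernelI e) z * conj (h I) - (z + I) * fsharp g z := fun z => by
    simpa [fsharp_apply] using congrArg conj (key (conj z))
  refine (memDB_kernelI he).of_norm_le_add hg hh he.add_I_mul.1.continuous
    (a := ‖h I‖ / ‖kernelI e I‖) (b := 1 / ‖kernelI e I‖) (by positivity) (by positivity)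
    (fun z hz => ?_) (fun z hz => ?_)
  · exact norm_div_mul_le_of_mul_eq (kernelI_I_ne_zero he) (key z) (one_le_norm_add_I hz)
      (norm_sub_I_le_norm_add_I hz)
  · simpa using norm_div_mul_le_of_mul_eq ((map_ne_zero _).2 (kernelI_I_ne_zero he))
      (key_fsharp z) (one_le_norm_add_I hz.le) le_rfl

lemma exists_closedBall_bounds {f g : ℂ → ℂ} (hf : Continuous f) (hg : Continuous g) {w : ℂ}
    (hfw : f w ≠ 0) : ∃ δ r M : ℝ, 0 < δ ∧ 0 < r ∧ 0 ≤ M ∧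
      ∀ z, ‖z - w‖ ≤ δ → r ≤ ‖f z‖ ∧ ‖g z‖ ≤ M := by
  have hev : ∀ᶠ z in nhds w, ‖f w‖ / 2 < ‖f z‖ :=
    hf.continuousAt.norm.eventually (lt_mem_nhds (half_lt_self (norm_pos_iff.2 hfw)))
  obtain ⟨δ, hδ, hball⟩ := nhds_basis_closedBall.eventually_iff.1 hev
  obtain ⟨M, hM⟩ := (isCompact_closedBall w δ).exists_bound_of_continuousOn hg.continuousOn
  refine ⟨δ, ‖f w‖ / 2, M, hδ, by positivity,
    (norm_nonneg _).trans (hM w (mem_closedBall_self hδ.le)), fun z hz => ?_⟩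
  rw [← mem_closedBall_iff_norm] at hz
  exact ⟨(hball hz).le, hM z hz⟩

lemma norm_le_of_eq_div_sub {F H G : ℂ → ℂ} {w a b : ℂ} {δ r M : ℝ} (hδ : 0 < δ) (hr : 0 < r)
    (hM : 0 ≤ M) (hG : ∀ z, z ≠ w → G z = (F z * a - b * H z) / (z - w))
    (hnear : ∀ z, ‖z - w‖ ≤ δ → r ≤ ‖F z‖ ∧ ‖G z‖ ≤ M) {z : ℂ} (hz : z + I ≠ 0) :
    ‖G z‖ ≤ (‖a‖ / δ + M / r) * ‖F z‖ + ‖b‖ * (δ + ‖w‖ + 1) / δ * (‖H z‖ / ‖z + I‖) := by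
  have hrest : 0 ≤ ‖b‖ * (δ + ‖w‖ + 1) / δ * (‖H z‖ / ‖z + I‖) := by positivity
  rcases le_or_gt ‖z - w‖ δ with hclose | hfar
  · obtain ⟨hF, hGM⟩ := hnear z hclose
    calc ‖G z‖ ≤ M / r * r := by rwa [div_mul_cancel₀ _ hr.ne']
      _ ≤ M / r * ‖F z‖ := by gcongr
      _ ≤ _ := by nlinarith [norm_nonneg (F z), div_nonneg (norm_nonneg a) hδ.le]
  · have hzw : 0 < ‖z - w‖ := hδ.trans hfar
    have hIz : ‖z + I‖ ≤ ‖z - w‖ + (‖w‖ + 1) := by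
      calc ‖z + I‖ = ‖(z - w) + (w + I)‖ := by ring_nf
        _ ≤ ‖z - w‖ + (‖w‖ + 1) := (norm_add_le _ _).trans (by simpa using norm_add_le w I)
    have hinv : 1 / ‖z - w‖ ≤ (δ + ‖w‖ + 1) / δ / ‖z + I‖ := by
      rw [div_div, div_le_div_iff₀ hzw (by positivity)]
      nlinarith [norm_nonneg w]
    rw [hG z (by rintro rfl; simp at hzw)]
    calc ‖(F z * a - b * H z) / (z - w)‖ ≤ (‖F z‖ * ‖a‖ + ‖b‖ * ‖H z‖) * (1 / ‖z - w‖) := by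
          rw [norm_div, div_eq_mul_one_div]
          gcongr
          simpa only [norm_mul] using norm_sub_le (F z * a) (b * H z)
      _ ≤ ‖F z‖ * ‖a‖ * (1 / δ) + ‖b‖ * ‖H z‖ * ((δ + ‖w‖ + 1) / δ / ‖z + I‖) := by
          rw [add_mul]
          gcongr
      _ = ‖a‖ / δ * ‖F z‖ + ‖b‖ * (δ + ‖w‖ + 1) / δ * (‖H z‖ / ‖z + I‖) := by ring
      _ ≤ _ := by
          rw [add_mul]
          linarith [show 0 ≤ M / r * ‖F z‖ by positivity]

lemma norm_div_le_add_of_norm_le {x y u N E : ℂ} {A B : ℝ} (h : ‖x‖ ≤ A * ‖y‖ + B * (‖u‖ / ‖N‖)) :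
    ‖x / E‖ ≤ A * ‖y / E‖ + B * ‖u / (N * E)‖ := by
  simp only [norm_div, norm_mul]
  calc ‖x‖ / ‖E‖ ≤ (A * ‖y‖ + B * (‖u‖ / ‖N‖)) / ‖E‖ := by gcongr
    _ = _ := by ring

theorem MemDB.assocCond {e h : ℂ → ℂ} (he : IsHB e) (hh : MemDB (fun z => (z + I) * e z) h) :
    AssocCond e h := by
  intro f w hf hfw
  set g := dslope (fun z => f z * h w - f w * h z) w
  have hgeq : ∀ z, z ≠ w → g z = (f z * h w - f w * h z) / (z - w) := fun z hz => by
    simp [g, dslope_of_ne _ hz, slope_def_field]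
  have hg_fsharp : ∀ z, z ≠ conj w →
      fsharp g z = (fsharp f z * conj (h w) - conj (f w) * fsharp h z) / (z - conj w) :=
    fun z hz => by simp [fsharp_eq_div_sub hgeq hz, fsharp_apply]
  have hgd : Differentiable ℂ g := ((hf.1.mul_const _).sub (hh.1.const_mul _)).dslope w
  obtain ⟨δ, r, M, hδ, hr, hM, hnear⟩ :=
    exists_closedBall_bounds hf.1.continuous hgd.continuous hfw
  have hnear_conj : ∀ z, ‖z - conj w‖ ≤ δ → r ≤ ‖fsharp f z‖ ∧ ‖fsharp g z‖ ≤ M := fun z hz => by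
    rw [norm_fsharp, norm_fsharp]
    exact hnear _ (by rwa [← norm_conj, map_sub, conj_conj])
  have hI : ∀ z : ℂ, 0 ≤ z.im → z + I ≠ 0 := fun z hz => by
    simpa using (one_le_norm_add_I hz).trans_lt' one_pos
  refine ⟨g, hgeq, hf.of_norm_le_add hh hgd he.1.continuous
    (a := ‖h w‖ / δ + M / r) (b := ‖f w‖ * (δ + ‖w‖ + 1) / δ) (by positivity) (by positivity)
    (fun z hz => ?_) (fun z hz => ?_)⟩
  · exact norm_div_le_add_of_norm_le (norm_le_of_eq_div_sub hδ hr hM hgeq hnear (hI z hz))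
  · simpa only [norm_conj] using norm_div_le_add_of_norm_le (E := e z)
      (norm_le_of_eq_div_sub hδ hr hM hg_fsharp hnear_conj (hI z hz.le))

/-- `(z + i)e(z)` is an HB function, and an entire function `h` is
associated to `B(e)` iff `h ∈ B((z + i)e)`. -/
theorem statement12 (e : ℂ → ℂ) (he : IsHB e) :
    IsHB (fun z => (z + Complex.I) * e z) ∧
    ∀ h : ℂ → ℂ, Differentiable ℂ h →
      (AssocCond e h ↔ MemDB (fun z => (z + Complex.I) * e z) h) :=
  ⟨he.add_I_mul, fun _ hh => ⟨fun ha => ha.memDB_add_I_mul he hh, fun hm => hm.assocCond he⟩⟩
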